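/- Define P_n(r) = ((1/n)∑_{i=1}^n i^r / ((1/(n+1))∑_{i=1}^{n+1} i^r))^{1/r} for r ≠ 0. Then for every integer n ≥ 1 and real numbers r, r' with r ≤ 1 < r', P_n(r) ≥ P_n(r'). -/

import Mathlib

/-!
With `c = (n + 1) / (n + 2)`, the point `(n + 2) j` is the convex combination of `(n + 1) j` and
`(n + 1) (j + 1)` with weights `(n + 1 - j) / (n + 1)` and `j / (n + 1)`. Summing Jensen's
inequality over `1 ≤ j ≤ n` and regrouping gives
`(n + 1) ∑_{j ≤ n} f ((n + 2) j) ≤ n ∑_{j ≤ n + 1} f ((n + 1) j)` for convex `f`, reversed for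
concave `f`. For `f x = x ^ ρ` this reads `P_n(ρ) ^ ρ ≤ c ^ ρ` when `ρ < 0` or `ρ ≥ 1` and
`P_n(ρ) ^ ρ ≥ c ^ ρ` when `0 < ρ ≤ 1`; taking `1/ρ`-th powers, `P_n(r') ≤ c ≤ P_n(r)`.
-/

open Finset Real

theorem convexOn_rpow_of_nonpos {p : ℝ} (hp : p ≤ 0) :
    ConvexOn ℝ (Set.Ioi 0) fun x : ℝ ↦ x ^ p := by
  refine ⟨convex_Ioi 0, fun x (hx : 0 < x) y (hy : 0 < y) a b ha hb hab ↦ ?_⟩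
  -- weighted AM-GM, once for `x, y` and once for `x ^ p, y ^ p`
  calc (a • x + b • y) ^ p ≤ (x ^ a * y ^ b) ^ p :=
        rpow_le_rpow_of_nonpos (by positivity)
          (geom_mean_le_arith_mean2_weighted ha hb hx.le hy.le hab) hp
    _ = (x ^ p) ^ a * (y ^ p) ^ b := by
        rw [mul_rpow (by positivity) (by positivity), ← rpow_mul hx.le, ← rpow_mul hy.le,
          ← rpow_mul hx.le, ← rpow_mul hy.le, mul_comm a, mul_comm b]
    _ ≤ a • x ^ p + b • y ^ p :=
        geom_mean_le_arith_mean2_weighted ha hb (by positivity) (by positivity) hab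

theorem sum_Icc_sub_mul_add_mul_succ {R : Type*} [CommRing R] (c : ℕ → R) (n : ℕ) :
    ∑ j ∈ Icc 1 n, (((n : R) + 1 - j) * c j + j * c (j + 1)) = n * ∑ j ∈ Icc 1 (n + 1), c j := by
  induction n with
  | zero => simp
  | succ m ih =>
    rw [sum_Icc_succ_top (by omega), sum_Icc_succ_top (by omega) c]
    have : ∑ j ∈ Icc 1 m, ((((m + 1 : ℕ) : R) + 1 - j) * c j + j * c (j + 1)) =
        ∑ j ∈ Icc 1 m, (((m : R) + 1 - j) * c j + j * c (j + 1)) + ∑ j ∈ Icc 1 m, c j := by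
      rw [← sum_add_distrib]
      exact sum_congr rfl fun j _ ↦ by push_cast; ring
    rw [this, ih, sum_Icc_succ_top (by omega) c]
    push_cast; ring

theorem ConvexOn.mul_sum_Icc_le {f : ℝ → ℝ} (hf : ConvexOn ℝ (Set.Ioi 0) f) (n : ℕ) :
    ((n : ℝ) + 1) * ∑ j ∈ Icc 1 n, f ((n + 2) * j) ≤ n * ∑ j ∈ Icc 1 (n + 1), f ((n + 1) * j) := by
  have step : ∀ j ∈ Icc 1 n, ((n : ℝ) + 1) * f ((n + 2) * j) ≤
      ((n : ℝ) + 1 - j) * f ((n + 1) * j) + j * f ((n + 1) * (j + 1)) := by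
    intro j hj
    obtain ⟨hj1, hjn⟩ := mem_Icc.1 hj
    have hj1 : (1 : ℝ) ≤ j := by exact_mod_cast hj1
    have hjn : (j : ℝ) ≤ n := by exact_mod_cast hjn
    have hn : (0 : ℝ) < n + 1 := by positivity
    have h := hf.2 (show ((n : ℝ) + 1) * j ∈ Set.Ioi 0 from by simp only [Set.mem_Ioi]; positivity)
      (show ((n : ℝ) + 1) * (j + 1) ∈ Set.Ioi 0 from by simp only [Set.mem_Ioi]; positivity)
      (show (0 : ℝ) ≤ (n + 1 - j) / (n + 1) from div_nonneg (by linarith) hn.le)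
      (show (0 : ℝ) ≤ j / (n + 1) by positivity) (by field_simp; ring)
    have hcomb : ((n : ℝ) + 1 - j) / (n + 1) * ((n + 1) * j) + j / (n + 1) * ((n + 1) * (j + 1)) =
        (n + 2) * j := by
      field_simp; ring
    simp only [smul_eq_mul, hcomb] at h
    calc ((n : ℝ) + 1) * f ((n + 2) * j)
        ≤ (n + 1) * ((n + 1 - j) / (n + 1) * f ((n + 1) * j) +
            j / (n + 1) * f ((n + 1) * (j + 1))) :=
          mul_le_mul_of_nonneg_left h hn.le
      _ = _ := by field_simp
  calc ((n : ℝ) + 1) * ∑ j ∈ Icc 1 n, f ((n + 2) * j)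
      ≤ ∑ j ∈ Icc 1 n, (((n : ℝ) + 1 - j) * f ((n + 1) * j) + j * f ((n + 1) * (j + 1))) := by
        rw [mul_sum]; exact sum_le_sum step
    _ = n * ∑ j ∈ Icc 1 (n + 1), f ((n + 1) * j) := by
        simpa using sum_Icc_sub_mul_add_mul_succ (fun j : ℕ ↦ f ((n + 1) * j)) n

theorem sum_mul_rpow (s : Finset ℕ) {a : ℝ} (ha : 0 ≤ a) (ρ : ℝ) :
    ∑ i ∈ s, (a * i) ^ ρ = a ^ ρ * ∑ i ∈ s, (i : ℝ) ^ ρ := by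
  rw [mul_sum]
  exact sum_congr rfl fun i _ ↦ mul_rpow ha i.cast_nonneg

theorem sum_Icc_rpow_pos {N : ℕ} (hN : 1 ≤ N) (ρ : ℝ) : 0 < ∑ i ∈ Icc 1 N, (i : ℝ) ^ ρ :=
  sum_pos (fun _ hi ↦ rpow_pos_of_pos (Nat.cast_pos.2 (mem_Icc.1 hi).1) ρ)
    (nonempty_Icc.2 hN)

/-- `P_n(ρ) ^ ρ` in the notation of the statement. -/
noncomputable def powerSumMeanRatio (n : ℕ) (ρ : ℝ) : ℝ :=
  (1 / (n : ℝ) * ∑ i ∈ Icc 1 n, (i : ℝ) ^ ρ) /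
    (1 / ((n : ℝ) + 1) * ∑ i ∈ Icc 1 (n + 1), (i : ℝ) ^ ρ)

theorem powerSumMeanRatio_pos {n : ℕ} (hn : 1 ≤ n) (ρ : ℝ) : 0 < powerSumMeanRatio n ρ := by
  have := sum_Icc_rpow_pos hn ρ
  have := sum_Icc_rpow_pos (Nat.le_add_left 1 n) ρ
  have : (0 : ℝ) < n := by exact_mod_cast hn
  unfold powerSumMeanRatio
  positivity

theorem powerSumMeanRatio_eq {n : ℕ} (hn : 1 ≤ n) (ρ : ℝ) :
    powerSumMeanRatio n ρ = (((n : ℝ) + 1) / (n + 2)) ^ ρ *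
      (((n + 1) * ∑ j ∈ Icc 1 n, ((n + 2) * j : ℝ) ^ ρ) /
        (n * ∑ j ∈ Icc 1 (n + 1), ((n + 1) * j : ℝ) ^ ρ)) := by
  have := sum_Icc_rpow_pos (Nat.le_add_left 1 n) ρ
  have : (0 : ℝ) < n := by exact_mod_cast hn
  rw [sum_mul_rpow _ (by positivity), sum_mul_rpow _ (by positivity),
    div_rpow (by positivity) (by positivity), powerSumMeanRatio]
  field_simp

theorem powerSumMeanRatio_le_of_convexOn {n : ℕ} (hn : 1 ≤ n) {ρ : ℝ}
    (hρ : ConvexOn ℝ (Set.Ioi 0) fun x : ℝ ↦ x ^ ρ) :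
    powerSumMeanRatio n ρ ≤ (((n : ℝ) + 1) / (n + 2)) ^ ρ := by
  have : (0 : ℝ) < n := by exact_mod_cast hn
  have := sum_Icc_rpow_pos (Nat.le_add_left 1 n) ρ
  rw [powerSumMeanRatio_eq hn]
  refine mul_le_of_le_one_right (by positivity) (div_le_one_of_le₀ (hρ.mul_sum_Icc_le n) ?_)
  rw [sum_mul_rpow _ (by positivity)]
  positivity

theorem powerSumMeanRatio_ge_of_concaveOn {n : ℕ} (hn : 1 ≤ n) {ρ : ℝ}
    (hρ : ConcaveOn ℝ (Set.Ioi 0) fun x : ℝ ↦ x ^ ρ) :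
    (((n : ℝ) + 1) / (n + 2)) ^ ρ ≤ powerSumMeanRatio n ρ := by
  have : (0 : ℝ) < n := by exact_mod_cast hn
  have := sum_Icc_rpow_pos (Nat.le_add_left 1 n) ρ
  have h := hρ.neg.mul_sum_Icc_le n
  simp only [Pi.neg_apply, sum_neg_distrib, mul_neg, neg_le_neg_iff] at h
  rw [powerSumMeanRatio_eq hn]
  refine le_mul_of_one_le_right (by positivity) ((one_le_div₀ ?_).2 h)
  rw [sum_mul_rpow _ (by positivity)]
  positivity

theorem P_le_one_ge (n : ℕ) (hn : 1 ≤ n) (r r' : ℝ) (hr : r ≤ 1) (hr' : 1 < r') (hr0 : r ≠ 0) :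
    ((1 / n * ∑ i ∈ Finset.Icc 1 n, (i : ℝ) ^ r) /
        (1 / (n + 1) * ∑ i ∈ Finset.Icc 1 (n + 1), (i : ℝ) ^ r)) ^ (1 / r) ≥
    ((1 / n * ∑ i ∈ Finset.Icc 1 n, (i : ℝ) ^ r') /
        (1 / (n + 1) * ∑ i ∈ Finset.Icc 1 (n + 1), (i : ℝ) ^ r')) ^ (1 / r') := by
  change powerSumMeanRatio n r' ^ (1 / r') ≤ powerSumMeanRatio n r ^ (1 / r)
  have hc : (0 : ℝ) < (n + 1) / (n + 2) := by positivity
  have upper : powerSumMeanRatio n r' ^ (1 / r') ≤ (n + 1) / (n + 2) := by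
    rw [one_div, rpow_inv_le_iff_of_pos (powerSumMeanRatio_pos hn r').le hc.le (by linarith)]
    exact powerSumMeanRatio_le_of_convexOn hn
      ((convexOn_rpow hr'.le).subset Set.Ioi_subset_Ici_self (convex_Ioi 0))
  have lower : ((n : ℝ) + 1) / (n + 2) ≤ powerSumMeanRatio n r ^ (1 / r) := by
    rw [one_div]
    rcases hr0.lt_or_gt with hneg | hpos
    · rw [le_rpow_inv_iff_of_neg hc (powerSumMeanRatio_pos hn r) hneg]
      exact powerSumMeanRatio_le_of_convexOn hn (convexOn_rpow_of_nonpos hneg.le)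
    · rw [le_rpow_inv_iff_of_pos hc.le (powerSumMeanRatio_pos hn r).le hpos]
      exact powerSumMeanRatio_ge_of_concaveOn hn
        ((concaveOn_rpow hpos.le hr).subset Set.Ioi_subset_Ici_self (convex_Ioi 0))
  exact upper.trans lower
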